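/- Fix N ∈ ℕ, σ > 0, T > 0 and C₁ > 0. Let u : ℝ → (ℕ → ℂ) with u(t,k) = 0 for all k > N, each t ↦ u(t,k) differentiable, satisfying the Galerkin system: for 0 ≤ k ≤ N, i·(d/dt)u(t,k) = ∑ u(t,n)·conj(u(t,j))·u(t,m), summed over (n,j,m) with 0 ≤ n,j,m ≤ N and n + m = j + k. Assume ∑_{k=0}^{N} |u(t,k)| ≤ C₁ for all t ∈ [0,T]. Set G₀ := ∑_{k=0}^{N} e^{σk}|u(0,k)|, C₀ := max{G₀, ((1+√5)/2)·e·C₁} and λ := 4·C₀·C₁. Then for every t ∈ [0,T], ∑_{k=0}^{N} e^{σ·e^{−λt}·k}·|u(t,k)| ≤ C₀. -/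

import Mathlib

open scoped BigOperators

/-- The cubic nonlinearity of the Galerkin-truncated Szegő equation on the Fourier side:
for frequency `k`, the sum of `u(t,n) * conj (u(t,j)) * u(t,m)` over all triples
`(n,j,m)` with `0 ≤ n,j,m ≤ N` and `n + m = j + k`. -/
noncomputable def galerkinCubic (N : ℕ) (u : ℝ → ℕ → ℂ) (t : ℝ) (k : ℕ) : ℂ :=
  ∑ p ∈ (Finset.range (N + 1) ×ˢ Finset.range (N + 1) ×ˢ Finset.range (N + 1)).filter
      (fun p => p.1 + p.2.2 = p.2.1 + k),
    u t p.1 * (starRingEnd ℂ) (u t p.2.1) * u t p.2.2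

/-- `u : ℝ → (ℕ → ℂ)` is a solution of the `N`-th Galerkin approximation
`i ∂ₜ u_N = P_N(|u_N|² u_N)` of the cubic Szegő equation: the Fourier coefficients
vanish for `k > N`, and for `0 ≤ k ≤ N` the map `t ↦ u(t,k)` is differentiable with
`i u'(t,k) = ∑_{0 ≤ n,j,m ≤ N, n+m=j+k} u(t,n) conj(u(t,j)) u(t,m)`. -/
def IsGalerkinSolution (N : ℕ) (u : ℝ → ℕ → ℂ) : Prop :=
  (∀ t : ℝ, ∀ k : ℕ, N < k → u t k = 0) ∧
  ∀ t : ℝ, ∀ k : ℕ, k ≤ N →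
    HasDerivAt (fun s : ℝ => u s k) (-Complex.I * galerkinCubic N u t k) t

/-! The weighted norm `f t = ∑ₖ e^{c(t) k} |u(t,k)|`, `c(t) = σ e^{-λt}`, has upper right Dini
derivative at most `∑ₖ e^{ck} |P_N(|u|²u)ₖ| - λ ∑ₖ c k e^{ck} |u(t,k)|`. Since `e^{ck} ≤ e^{cn} e^{cm}`
on resonant triples (`k ≤ n + m`), the cubic term is at most `f² C₁`, and `e^y ≤ e + y e^y` bounds the
dissipation term below by `f - e C₁`. So wherever `f = C₀` the Dini derivative is at most
`C₀ C₁ (4 e C₁ - 3 C₀) < 0`, because `C₀ ≥ φ e C₁` with `φ > 4/3`, and the comparison principle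
for Dini derivatives keeps `f ≤ C₀`. -/

open Finset Filter Topology Real

theorem exp_le_exp_one_add_mul_exp {x : ℝ} (hx : 0 ≤ x) : exp x ≤ exp 1 + x * exp x := by
  rcases le_total x 1 with h | h
  · nlinarith [exp_le_exp.2 h, exp_pos x]
  · nlinarith [exp_pos x, exp_pos 1]

noncomputable def weightedNorm (N : ℕ) (c : ℝ) (v : ℕ → ℂ) : ℝ :=
  ∑ k ∈ range (N + 1), exp (c * k) * ‖v k‖

theorem weightedNorm_le_exp_one_mul_add {N : ℕ} {c : ℝ} (hc : 0 ≤ c) (v : ℕ → ℂ) :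
    weightedNorm N c v ≤
      exp 1 * ∑ k ∈ range (N + 1), ‖v k‖ + ∑ k ∈ range (N + 1), c * k * exp (c * k) * ‖v k‖ := by
  rw [weightedNorm, mul_sum, ← sum_add_distrib]
  refine sum_le_sum fun k _ => ?_
  nlinarith [exp_le_exp_one_add_mul_exp (by positivity : 0 ≤ c * k), norm_nonneg (v k)]

theorem sum_sum_filter_add_eq_add_le {s : Finset (ℕ × ℕ × ℕ)} {g : ℕ × ℕ × ℕ → ℝ}
    (hg : ∀ p ∈ s, 0 ≤ g p) (K : Finset ℕ) :
    ∑ k ∈ K, ∑ p ∈ s with p.1 + p.2.2 = p.2.1 + k, g p ≤ ∑ p ∈ s, g p := by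
  rw [← sum_biUnion]
  · exact sum_le_sum_of_subset_of_nonneg (biUnion_subset.2 fun _ _ => filter_subset _ _)
      fun p hp _ => hg p hp
  · intro k _ k' _ hne
    exact disjoint_filter.2 fun p _ h h' => hne (by omega)

theorem weightedNorm_galerkinCubic_le (N : ℕ) {c : ℝ} (hc : 0 ≤ c) (u : ℝ → ℕ → ℂ) (t : ℝ) :
    weightedNorm N c (galerkinCubic N u t) ≤
      weightedNorm N c (u t) * (∑ j ∈ range (N + 1), ‖u t j‖) * weightedNorm N c (u t) := by
  set A := range (N + 1)
  set g : ℕ × ℕ × ℕ → ℝ := fun p =>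
    exp (c * p.1) * ‖u t p.1‖ * ‖u t p.2.1‖ * (exp (c * p.2.2) * ‖u t p.2.2‖)
  have hterm : ∀ k : ℕ, exp (c * k) * ‖galerkinCubic N u t k‖ ≤
      ∑ p ∈ A ×ˢ A ×ˢ A with p.1 + p.2.2 = p.2.1 + k, g p := by
    intro k
    calc exp (c * k) * ‖galerkinCubic N u t k‖
        ≤ exp (c * k) * ∑ p ∈ A ×ˢ A ×ˢ A with p.1 + p.2.2 = p.2.1 + k,
            ‖u t p.1 * (starRingEnd ℂ) (u t p.2.1) * u t p.2.2‖ := by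
          gcongr
          exact norm_sum_le _ _
      _ ≤ _ := by
          rw [mul_sum]
          refine sum_le_sum fun p hp => ?_
          have hk : k ≤ p.1 + p.2.2 := by have := (mem_filter.1 hp).2; omega
          have hexp : exp (c * k) ≤ exp (c * p.1) * exp (c * p.2.2) := by
            rw [← exp_add, ← mul_add]
            exact exp_le_exp.2 (mul_le_mul_of_nonneg_left (by exact_mod_cast hk) hc)
          simp only [g, norm_mul, Complex.norm_conj]
          calc exp (c * k) * (‖u t p.1‖ * ‖u t p.2.1‖ * ‖u t p.2.2‖)
              ≤ exp (c * p.1) * exp (c * p.2.2) * (‖u t p.1‖ * ‖u t p.2.1‖ * ‖u t p.2.2‖) := by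
                gcongr
            _ = _ := by ring
  calc weightedNorm N c (galerkinCubic N u t)
      ≤ ∑ k ∈ A, ∑ p ∈ A ×ˢ A ×ˢ A with p.1 + p.2.2 = p.2.1 + k, g p :=
        sum_le_sum fun k _ => hterm k
    _ ≤ ∑ p ∈ A ×ˢ A ×ˢ A, g p := sum_sum_filter_add_eq_add_le (fun p _ => by positivity) A
    _ = _ := by simp only [g, sum_product, weightedNorm, ← sum_mul, ← mul_sum]; rfl

section Dini

variable {E : Type*} [NormedAddCommGroup E] [NormedSpace ℝ E]

theorem slope_mul_norm_le {w : ℝ → ℝ} {a : ℝ → E} {x z : ℝ} (hxz : x < z) (hw : 0 ≤ w z) :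
    slope (fun t => w t * ‖a t‖) x z ≤ w z * ‖slope a x z‖ + slope w x z * ‖a x‖ := by
  have hzx : 0 < z - x := sub_pos.2 hxz
  rw [slope_def_field, slope_def_field, slope_def_module, norm_smul, norm_inv,
    Real.norm_of_nonneg hzx.le, ← div_eq_inv_mul, mul_div_assoc', div_mul_eq_mul_div,
    ← add_div, div_le_div_iff_of_pos_right hzx]
  nlinarith [norm_sub_norm_le (a z) (a x)]

theorem tendsto_mul_norm_slope_add_slope_mul_norm {w : ℝ → ℝ} {a : ℝ → E} {w' : ℝ} {a' : E}
    {x : ℝ} (hw : HasDerivAt w w' x) (ha : HasDerivAt a a' x) :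
    Tendsto (fun z => w z * ‖slope a x z‖ + slope w x z * ‖a x‖) (𝓝[≠] x)
      (𝓝 (w x * ‖a'‖ + w' * ‖a x‖)) :=
  ((hw.continuousAt.tendsto.mono_left nhdsWithin_le_nhds).mul
    (hasDerivAt_iff_tendsto_slope.1 ha).norm).add
    ((hasDerivAt_iff_tendsto_slope.1 hw).mul_const _)

theorem eventually_slope_sum_mul_norm_lt {ι : Type*} (s : Finset ι) {w : ι → ℝ → ℝ}
    {a : ι → ℝ → E} {w' : ι → ℝ} {a' : ι → E} {x r : ℝ}
    (hw : ∀ i ∈ s, HasDerivAt (w i) (w' i) x) (ha : ∀ i ∈ s, HasDerivAt (a i) (a' i) x)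
    (hw_nonneg : ∀ i ∈ s, ∀ t, 0 ≤ w i t)
    (hr : ∑ i ∈ s, (w i x * ‖a' i‖ + w' i * ‖a i x‖) < r) :
    ∀ᶠ z in 𝓝[>] x, slope (fun t => ∑ i ∈ s, w i t * ‖a i t‖) x z < r := by
  have hlim := (tendsto_finsetSum s fun i hi =>
    tendsto_mul_norm_slope_add_slope_mul_norm (hw i hi) (ha i hi)).mono_left (nhdsGT_le_nhdsNE x)
  filter_upwards [hlim.eventually_lt_const hr, self_mem_nhdsWithin] with z hz hxz
  have hslope_sum : slope (fun t => ∑ i ∈ s, w i t * ‖a i t‖) x z =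
      ∑ i ∈ s, slope (fun t => w i t * ‖a i t‖) x z := by
    simp only [slope_def_field, ← sum_sub_distrib, sum_div]
  refine hslope_sum ▸ lt_of_le_of_lt ?_ hz
  exact sum_le_sum fun i hi => slope_mul_norm_le (a := a i) hxz (hw_nonneg i hi z)

end Dini

theorem hasDerivAt_exp_mul_exp_neg_mul (σ lam k x : ℝ) :
    HasDerivAt (fun t => exp (σ * exp (-lam * t) * k))
      (-lam * (σ * exp (-lam * x) * k * exp (σ * exp (-lam * x) * k))) x := by
  convert ((((hasDerivAt_id' x).const_mul (-lam)).exp.const_mul σ).mul_const k).exp using 1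
  ring

theorem weightedNorm_galerkinCubic_sub_lt_zero {N : ℕ} {u : ℝ → ℕ → ℂ} {x c C₀ C₁ : ℝ}
    (hc : 0 ≤ c) (hC₁ : 0 < C₁) (hC₀ : 4 * exp 1 * C₁ < 3 * C₀)
    (hW : ∑ k ∈ range (N + 1), ‖u x k‖ ≤ C₁) (hx : weightedNorm N c (u x) = C₀) :
    weightedNorm N c (galerkinCubic N u x) -
      4 * C₀ * C₁ * ∑ k ∈ range (N + 1), c * k * exp (c * k) * ‖u x k‖ < 0 := by
  have hC₀pos : 0 < C₀ := by nlinarith [exp_pos 1]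
  have hcubic : weightedNorm N c (galerkinCubic N u x) ≤ C₀ * C₁ * C₀ := by
    have := weightedNorm_galerkinCubic_le N hc u x
    rw [hx] at this
    exact this.trans (by gcongr)
  have hdiss : C₀ - exp 1 * C₁ ≤ ∑ k ∈ range (N + 1), c * k * exp (c * k) * ‖u x k‖ := by
    have := weightedNorm_le_exp_one_mul_add (N := N) hc (u x)
    rw [hx] at this
    nlinarith [exp_pos 1]
  nlinarith [mul_le_mul_of_nonneg_left hdiss (by positivity : 0 ≤ 4 * C₀ * C₁),
    mul_pos hC₀pos hC₁]

theorem galerkin_gevrey_bound_general (N : ℕ) (σ T C₁ : ℝ) (hσ : 0 < σ)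
    (hC₁ : 0 < C₁) (u : ℝ → ℕ → ℂ) (hu : IsGalerkinSolution N u)
    (hW : ∀ t ∈ Set.Icc (0 : ℝ) T, ∑ k ∈ Finset.range (N + 1), ‖u t k‖ ≤ C₁)
    (G₀ C₀ lam : ℝ)
    (hG₀ : G₀ = ∑ k ∈ Finset.range (N + 1), Real.exp (σ * k) * ‖u 0 k‖)
    (hC₀ : C₀ = max G₀ ((1 + Real.sqrt 5) / 2 * Real.exp 1 * C₁))
    (hlam : lam = 4 * C₀ * C₁) :
    ∀ t ∈ Set.Icc (0 : ℝ) T,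
      ∑ k ∈ Finset.range (N + 1), Real.exp (σ * Real.exp (-lam * t) * k) * ‖u t k‖ ≤ C₀ := by
  obtain ⟨-, hderiv⟩ := hu
  have hC₀_gt : 4 * exp 1 * C₁ < 3 * C₀ := by
    have : (5 : ℝ) / 3 < √5 := (Real.lt_sqrt (by norm_num)).2 (by norm_num)
    nlinarith [hC₀ ▸ le_max_right G₀ ((1 + √5) / 2 * exp 1 * C₁), mul_pos (exp_pos 1) hC₁]
  let c : ℝ → ℝ := fun t => σ * exp (-lam * t)
  let f t := weightedNorm N (c t) (u t)
  let F t := weightedNorm N (c t) (galerkinCubic N u t) -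
    lam * ∑ k ∈ range (N + 1), c t * k * exp (c t * k) * ‖u t k‖
  have hf_cont : ContinuousOn f (Set.Icc 0 T) := by
    refine Continuous.continuousOn (continuous_finsetSum _ fun k hk => ?_)
    have hu_cont : Continuous fun t => u t k := continuous_iff_continuousAt.2 fun t =>
      (hderiv t k (Nat.lt_succ_iff.1 (mem_range.1 hk))).continuousAt
    fun_prop
  have hf_dini : ∀ x ∈ Set.Ico 0 T, ∀ r, F x < r → ∃ᶠ z in 𝓝[>] x, slope f x z < r := by
    intro x _ r hr
    refine (eventually_slope_sum_mul_norm_lt (range (N + 1))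
      (fun k _ => hasDerivAt_exp_mul_exp_neg_mul σ lam k x)
      (fun k hk => hderiv x k (Nat.lt_succ_iff.1 (mem_range.1 hk)))
      (fun _ _ _ => (exp_pos _).le) ?_).frequently
    convert hr using 1
    simp only [F, weightedNorm, norm_mul, norm_neg, Complex.norm_I, one_mul, mul_sum,
      ← sum_sub_distrib]
    exact sum_congr rfl fun k _ => by ring
  have hf_zero : f 0 ≤ C₀ := by
    simp [f, c, weightedNorm, ← hG₀, hC₀]
  refine fun t ht => image_le_of_liminf_slope_right_lt_deriv_boundary hf_cont hf_dini hf_zero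
    (fun x => hasDerivAt_const x C₀) (fun x hx hfx => ?_) ht
  have := weightedNorm_galerkinCubic_sub_lt_zero (by positivity) hC₁ hC₀_gt
    (hW x (Set.Ico_subset_Icc_self hx)) hfx
  rwa [← hlam] at this

/-- Gevrey bound for Galerkin approximations: with
`∑_{k≤N} |u(t,k)| ≤ C₁` on `[0,T]`, `G₀ = ∑_{k≤N} e^{σk}|u(0,k)|`,
`C₀ = max{G₀, ((1+√5)/2) e C₁}` and `λ = 4 C₀ C₁`, one has
`∑_{k≤N} e^{σ e^{-λt} k}|u(t,k)| ≤ C₀` on `[0,T]`. -/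
theorem galerkin_gevrey_bound (N : ℕ) (σ T C₁ : ℝ) (hσ : 0 < σ) (hT : 0 < T)
    (hC₁ : 0 < C₁) (u : ℝ → ℕ → ℂ) (hu : IsGalerkinSolution N u)
    (hW : ∀ t ∈ Set.Icc (0 : ℝ) T, ∑ k ∈ Finset.range (N + 1), ‖u t k‖ ≤ C₁)
    (G₀ C₀ lam : ℝ)
    (hG₀ : G₀ = ∑ k ∈ Finset.range (N + 1), Real.exp (σ * k) * ‖u 0 k‖)
    (hC₀ : C₀ = max G₀ ((1 + Real.sqrt 5) / 2 * Real.exp 1 * C₁))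
    (hlam : lam = 4 * C₀ * C₁) :
    ∀ t ∈ Set.Icc (0 : ℝ) T,
      ∑ k ∈ Finset.range (N + 1), Real.exp (σ * Real.exp (-lam * t) * k) * ‖u t k‖ ≤ C₀ :=
  galerkin_gevrey_bound_general N σ T C₁ hσ hC₁ u hu hW G₀ C₀ lam hG₀ hC₀ hlam
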